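/- arXiv:2005.07652 — 5 statements merged into one kernel-verified Lean document; each statement's English description precedes it below -/
import Mathlib

section
/- Let γ ∈ (0,1], λ < 1/2, η ≤ λ, and let z be a random variable with |z| ≤ 1 almost surely. Define φ(s) = λ(1 − s/γ) for s > γ and φ(s) = (1−λ)(1 − s/γ) for s ≤ γ, and G = E[η·φ(−z) + (1−η)·φ(z)]. Then G ≥ (η−λ)/γ + (1/2)(1−2λ)(1−η)·P[z ≤ γ/2] + λ + η − 2λη. -/
open MeasureTheory

lemma key_ineq (γ lam η x : ℝ) (hγ0 : 0 < γ) (hγ1 : γ ≤ 1)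
    (hlam : lam < 1/2) (hηlam : η ≤ lam) (hη : 0 ≤ η) (hx1 : -1 ≤ x) (hx2 : x ≤ 1) :
    ((η - lam)/γ + lam + η - 2*lam*η) + ((1/2)*(1-2*lam)*(1-η)) * (if x ≤ γ/2 then (1:ℝ) else 0)
      ≤ η * (if γ < -x then lam * (1 - (-x)/γ) else (1-lam)*(1-(-x)/γ))
        + (1-η) * (if γ < x then lam*(1 - x/γ) else (1-lam)*(1-x/γ)) := by
  have hlam0 : 0 ≤ lam := le_trans hη hηlam
  have hg : 0 < γ⁻¹ := inv_pos.2 hγ0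
  have hgg : γ * γ⁻¹ = 1 := mul_inv_cancel₀ hγ0.ne'
  have hg1 : 1 ≤ γ⁻¹ := one_le_inv_iff₀.2 ⟨hγ0, hγ1⟩
  have hxa : x * γ⁻¹ ≤ γ⁻¹ := by nlinarith
  have hxb : -γ⁻¹ ≤ x * γ⁻¹ := by nlinarith
  have hla : 0 ≤ lam - η := by linarith
  have hga : 0 ≤ γ⁻¹ - 1 := by linarith
  simp only [div_eq_mul_inv, neg_mul]
  split_ifs with h1 h2 h3 h4 h5 h6 h7
  · exact absurd (by linarith : γ < γ) (lt_irrefl γ)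
  · -- x < -γ : t = x γ⁻¹ ≤ -1
    have ht : x * γ⁻¹ ≤ -1 := by nlinarith [mul_le_mul_of_nonneg_right h2.le hg.le]
    nlinarith [mul_nonneg hla hga,
      mul_nonneg (by linarith : (0:ℝ) ≤ 1/2 - lam) (by linarith : (0:ℝ) ≤ 1 - lam),
      mul_nonneg (by linarith : (0:ℝ) ≤ 1 - lam - η) (by linarith : (0:ℝ) ≤ -1 - x*γ⁻¹),
      mul_nonneg hla (by linarith : (0:ℝ) ≤ 1/2 - lam)]
  · exact absurd (by linarith : γ < γ) (lt_irrefl γ)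
  · -- -γ ≤ x ≤ γ/2 : t ≤ 1/2
    have ht : x * γ⁻¹ ≤ 1/2 := by nlinarith [mul_le_mul_of_nonneg_right h1 hg.le]
    nlinarith [mul_nonneg (mul_nonneg (by linarith : (0:ℝ) ≤ 1 - lam)
        (by linarith : (0:ℝ) ≤ 1 - 2*η)) (by linarith : (0:ℝ) ≤ 1/2 - x*γ⁻¹),
      mul_nonneg hla (by linarith : (0:ℝ) ≤ γ⁻¹ - 1/2)]
  · exact absurd (by linarith : γ < γ) (lt_irrefl γ)
  · -- γ < -x but ¬(x ≤ γ/2): contradiction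
    exact absurd (by linarith : x ≤ γ/2) h1
  · -- γ < x : t ≤ 1, indicator 0
    nlinarith [mul_nonneg hla (by nlinarith : (0:ℝ) ≤ γ⁻¹ - x*γ⁻¹)]
  · -- γ/2 < x ≤ γ : 1/2 ≤ t ≤ 1
    have ht : x * γ⁻¹ ≤ 1 := by
      have := mul_le_mul_of_nonneg_right (le_of_not_gt h7) hg.le; linarith
    nlinarith [mul_nonneg (mul_nonneg (by linarith : (0:ℝ) ≤ 1 - lam)
        (by linarith : (0:ℝ) ≤ 1 - 2*η)) (by linarith : (0:ℝ) ≤ 1 - x*γ⁻¹),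
      mul_nonneg hla hga]


lemma phi_bound (γ lam s : ℝ) (hγ0 : 0 < γ) (hlam0 : 0 ≤ lam) (hlam : lam < 1/2)
    (hs1 : -1 ≤ s) (hs2 : s ≤ 1) :
    |if γ < s then lam * (1 - s/γ) else (1-lam)*(1-s/γ)| ≤ 1 + γ⁻¹ := by
  have hg : 0 < γ⁻¹ := inv_pos.2 hγ0
  have hgg : γ * γ⁻¹ = 1 := mul_inv_cancel₀ hγ0.ne'
  have hxa : s * γ⁻¹ ≤ γ⁻¹ := by nlinarith
  have hxb : -γ⁻¹ ≤ s * γ⁻¹ := by nlinarith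
  have habs : |1 - s/γ| ≤ 1 + γ⁻¹ := by
    rw [abs_le, div_eq_mul_inv]; constructor <;> nlinarith
  have h1 : (0:ℝ) ≤ 1 + γ⁻¹ := by linarith
  split_ifs
  · rw [abs_mul]
    calc |lam| * |1 - s/γ| ≤ 1 * (1 + γ⁻¹) :=
          mul_le_mul (by rw [abs_of_nonneg hlam0]; linarith) habs (abs_nonneg _) one_pos.le
      _ = 1 + γ⁻¹ := one_mul _
  · rw [abs_mul]
    calc |1 - lam| * |1 - s/γ| ≤ 1 * (1 + γ⁻¹) :=
          mul_le_mul (by rw [abs_of_nonneg (by linarith)]; linarith) habs (abs_nonneg _) one_pos.le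
      _ = 1 + γ⁻¹ := one_mul _

theorem stmt_9 {Ω : Type*} [MeasurableSpace Ω] (μ : Measure Ω) [IsProbabilityMeasure μ]
    (γ lam η : ℝ) (hγ : γ ∈ Set.Ioc (0:ℝ) 1) (hlam : lam < 1 / 2) (hηlam : η ≤ lam)
    (hη : 0 ≤ η)
    (z : Ω → ℝ) (hz : Measurable z) (hzbd : ∀ᵐ ω ∂μ, |z ω| ≤ 1)
    (φ : ℝ → ℝ)
    (hφ : ∀ s, φ s = if γ < s then lam * (1 - s / γ) else (1 - lam) * (1 - s / γ)) :
    (∫ ω, (η * φ (-(z ω)) + (1 - η) * φ (z ω)) ∂μ) ≥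
      (η - lam) / γ + (1 / 2) * (1 - 2 * lam) * (1 - η) * (μ {ω | z ω ≤ γ / 2}).toReal
        + lam + η - 2 * lam * η := by
  obtain ⟨hγ0, hγ1⟩ := hγ
  have hlam0 : 0 ≤ lam := le_trans hη hηlam
  set A : Set Ω := {ω | z ω ≤ γ / 2} with hA
  have hAm : MeasurableSet A := measurableSet_le hz measurable_const
  set C : ℝ := (η - lam) / γ + lam + η - 2 * lam * η with hC
  set D : ℝ := (1/2) * (1 - 2*lam) * (1 - η) with hD
  set g : Ω → ℝ := fun ω => C + D * A.indicator (fun _ => (1:ℝ)) ω with hgdef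
  have hφ' : φ = fun s => if γ < s then lam * (1 - s / γ) else (1 - lam) * (1 - s / γ) :=
    funext hφ
  have hφmeas : Measurable φ := by
    rw [hφ']
    exact Measurable.ite (measurableSet_lt measurable_const measurable_id)
      (by fun_prop) (by fun_prop)
  have hfmeas : Measurable fun ω => η * φ (-(z ω)) + (1 - η) * φ (z ω) :=
    (measurable_const.mul (hφmeas.comp hz.neg)).add
      (measurable_const.mul (hφmeas.comp hz))
  have hfint : Integrable (fun ω => η * φ (-(z ω)) + (1 - η) * φ (z ω)) μ := by
    refine Integrable.mono' (integrable_const (1 + γ⁻¹)) hfmeas.aestronglyMeasurable ?_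
    filter_upwards [hzbd] with ω hω
    obtain ⟨hx1, hx2⟩ := abs_le.1 hω
    have b1 : |φ (-(z ω))| ≤ 1 + γ⁻¹ := by
      rw [hφ (-(z ω))]
      exact phi_bound γ lam (-(z ω)) hγ0 hlam0 hlam (by linarith) (by linarith)
    have b2 : |φ (z ω)| ≤ 1 + γ⁻¹ := by
      rw [hφ (z ω)]
      exact phi_bound γ lam (z ω) hγ0 hlam0 hlam hx1 hx2
    have hη1 : η ≤ 1 := by linarith
    calc ‖η * φ (-(z ω)) + (1 - η) * φ (z ω)‖
        ≤ |η * φ (-(z ω))| + |(1 - η) * φ (z ω)| := abs_add_le _ _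
      _ = η * |φ (-(z ω))| + (1 - η) * |φ (z ω)| := by
          rw [abs_mul, abs_mul, abs_of_nonneg hη, abs_of_nonneg (by linarith : (0:ℝ) ≤ 1 - η)]
      _ ≤ η * (1 + γ⁻¹) + (1 - η) * (1 + γ⁻¹) := by
          gcongr <;> linarith
      _ = 1 + γ⁻¹ := by ring
  have hgint : Integrable g μ := by
    refine (integrable_const C).add (Integrable.const_mul ?_ D)
    exact (integrable_const (1:ℝ)).indicator hAm
  have hle : ∀ᵐ ω ∂μ, g ω ≤ η * φ (-(z ω)) + (1 - η) * φ (z ω) := by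
    filter_upwards [hzbd] with ω hω
    obtain ⟨hx1, hx2⟩ := abs_le.1 hω
    have h := key_ineq γ lam η (z ω) hγ0 hγ1 hlam hηlam hη hx1 hx2
    simp only [hφ (-(z ω)), hφ (z ω)]
    simp only [hgdef, Set.indicator_apply, hA, Set.mem_setOf_eq]
    exact h
  have hmono := integral_mono_ae hgint hfint hle
  have hgval : ∫ ω, g ω ∂μ = C + D * (μ A).toReal := by
    rw [hgdef]
    rw [integral_add (integrable_const C) ((integrable_const (1:ℝ)).indicator hAm |>.const_mul D)]
    rw [integral_const, probReal_univ, one_smul, MeasureTheory.integral_const_mul]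
    rw [MeasureTheory.integral_indicator_const (1:ℝ) hAm]
    simp [Measure.real]
  rw [hgval] at hmono
  rw [ge_iff_le]
  rw [hC] at hmono
  linarith
end

section
/- Let γ > 0, λ < 1/2, η ≤ λ, and let z be a random variable with z > γ almost surely and E[z/γ] > 1. Define φ(s) = λ(1 − s/γ) for s > γ and φ(s) = (1−λ)(1 − s/γ) for s ≤ γ. Then E[η·φ(−z) + (1−η)·φ(z)] ≤ 2η(1−λ). -/
open MeasureTheory

theorem stmt_10 {Ω : Type*} [MeasurableSpace Ω] (μ : Measure Ω) [IsProbabilityMeasure μ]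
    (γ lam η : ℝ) (hγ : 0 < γ) (hlam : lam < 1 / 2) (hηlam : η ≤ lam) (hη : 0 ≤ η)
    (z : Ω → ℝ) (hz : Measurable z) (hzint : Integrable z μ)
    (hzbd : ∀ᵐ ω ∂μ, γ < z ω) (hzmean : 1 < ∫ ω, z ω / γ ∂μ)
    (φ : ℝ → ℝ)
    (hφ : ∀ s, φ s = if γ < s then lam * (1 - s / γ) else (1 - lam) * (1 - s / γ)) :
    (∫ ω, (η * φ (-(z ω)) + (1 - η) * φ (z ω)) ∂μ) ≤ 2 * η * (1 - lam) := by
  have hcongr : (∫ ω, (η * φ (-(z ω)) + (1 - η) * φ (z ω)) ∂μ)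
      = ∫ ω, ((η + lam - 2*η*lam) + (η - lam) * (z ω / γ)) ∂μ := by
    refine integral_congr_ae ?_
    filter_upwards [hzbd] with ω hω
    have h1 : ¬ γ < -(z ω) := by linarith
    rw [hφ, hφ, if_pos hω, if_neg h1]
    field_simp
    ring
  have hint : Integrable (fun ω => z ω / γ) μ := hzint.div_const γ
  have hI : (∫ ω, ((η + lam - 2*η*lam) + (η - lam) * (z ω / γ)) ∂μ)
      = (η + lam - 2*η*lam) + (η - lam) * ∫ ω, z ω / γ ∂μ := by
    rw [integral_add (integrable_const _) (hint.const_mul _), integral_const,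
      integral_const_mul, probReal_univ, smul_eq_mul, one_mul]
  rw [hcongr, hI]
  nlinarith [hzmean, hηlam]
end

section
/- Let γ ∈ (0,1], η < 1/2, λ with η ≤ λ < 1/2, ε' > 0, and let z be a random variable with |z| ≤ 1 a.s. Define φ(s) = λ(1−s/γ) for s > γ and (1−λ)(1−s/γ) for s ≤ γ, and G(w) := E[η·φ(−z) + (1−η)·φ(z)]. Suppose G ≤ 2η(1−λ) + ε'. Then (1−η)·P[z ≤ γ/2] ≤ (2/(1−2λ))·(ε' + (λ−η)(1/γ − 1)). -/
open MeasureTheory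

-- Polynomial cores of the pointwise estimates (t plays the role of s/γ, c of 1/γ).
lemma poly1 (lam η t c : ℝ) (hη2 : η < 1/2) (hηlam : η ≤ lam) (hlam : lam < 1/2)
    (hη : 0 ≤ η) (hc1 : 1 ≤ c) (ht : t ≤ -1) :
    2*η*(1-lam) + (η-lam)*(c-1) ≤ η*(lam*(1+t)) + (1-η)*((1-lam)*(1-t)) := by
  nlinarith [mul_nonneg (show (0:ℝ) ≤ (1-η)*(1-lam) - η*lam by nlinarith)
      (show (0:ℝ) ≤ -1-t by linarith),
    mul_nonneg (sub_nonneg.2 hηlam) (sub_nonneg.2 hc1),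
    mul_nonneg (show (0:ℝ) ≤ 1-lam by linarith) (show (0:ℝ) ≤ 1-2*η by linarith)]

lemma poly2 (lam η t c : ℝ) (hη2 : η < 1/2) (hηlam : η ≤ lam) (hlam : lam < 1/2)
    (hη : 0 ≤ η) (hc1 : 1 ≤ c) (ht : t ≤ 1) :
    2*η*(1-lam) + (η-lam)*(c-1) ≤ η*((1-lam)*(1+t)) + (1-η)*((1-lam)*(1-t)) := by
  nlinarith [mul_nonneg (mul_nonneg (show (0:ℝ) ≤ 1-lam by linarith)
      (show (0:ℝ) ≤ 1-2*η by linarith)) (show (0:ℝ) ≤ 1-t by linarith),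
    mul_nonneg (sub_nonneg.2 hηlam) (sub_nonneg.2 hc1)]

lemma poly3 (lam η t c : ℝ) (hη2 : η < 1/2) (hηlam : η ≤ lam) (hlam : lam < 1/2)
    (hη : 0 ≤ η) (hc1 : 1 ≤ c) (ht : t ≤ c) :
    2*η*(1-lam) + (η-lam)*(c-1) ≤ η*((1-lam)*(1+t)) + (1-η)*(lam*(1-t)) := by
  nlinarith [mul_nonneg (sub_nonneg.2 hηlam) (show (0:ℝ) ≤ c - t by linarith)]

lemma poly4 (lam η t : ℝ) (hη2 : η < 1/2) (hηlam : η ≤ lam) (hlam : lam < 1/2)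
    (hη : 0 ≤ η) (ht : t ≤ -1) :
    (1-lam)*(1+2*η)/2 ≤ η*(lam*(1+t)) + (1-η)*((1-lam)*(1-t)) := by
  nlinarith [mul_nonneg (show (0:ℝ) ≤ (1-η)*(1-lam) - η*lam by nlinarith)
      (show (0:ℝ) ≤ -1-t by linarith),
    mul_nonneg (show (0:ℝ) ≤ 1-lam by linarith) (show (0:ℝ) ≤ 1-2*η by linarith)]

lemma poly5 (lam η t : ℝ) (hη2 : η < 1/2) (hηlam : η ≤ lam) (hlam : lam < 1/2)
    (hη : 0 ≤ η) (ht : t ≤ 1/2) :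
    (1-lam)*(1+2*η)/2 ≤ η*((1-lam)*(1+t)) + (1-η)*((1-lam)*(1-t)) := by
  nlinarith [mul_nonneg (mul_nonneg (show (0:ℝ) ≤ 1-lam by linarith)
      (show (0:ℝ) ≤ 1-2*η by linarith)) (show (0:ℝ) ≤ 1/2-t by linarith)]

lemma poly6 (lam η P d A : ℝ) (hP0 : 0 ≤ P) (hdP : d*P ≤ A)
    (h2d : (1-η)*(1-2*lam) ≤ 2*d) (hpos : 0 < 1 - 2*lam) :
    (1-η)*P ≤ (2/(1-2*lam)) * A := by
  rw [div_mul_eq_mul_div, le_div_iff₀ hpos]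
  nlinarith [mul_nonneg hP0 (show (0:ℝ) ≤ 2*d - (1-η)*(1-2*lam) by linarith)]

-- Pointwise lower bound on the integrand, valid for all |s| ≤ 1.
lemma phi_lb_aux (γ lam η : ℝ) (hγ0 : 0 < γ) (hγ1 : γ ≤ 1) (hη : 0 ≤ η)
    (hη2 : η < 1 / 2) (hηlam : η ≤ lam) (hlam : lam < 1 / 2)
    (φ : ℝ → ℝ)
    (hφ : ∀ s, φ s = if γ < s then lam * (1 - s / γ) else (1 - lam) * (1 - s / γ))
    (s : ℝ) (hs1 : -1 ≤ s) (hs2 : s ≤ 1) :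
    2 * η * (1 - lam) + (η - lam) * (1 / γ - 1) ≤ η * φ (-s) + (1 - η) * φ s := by
  have hc1 : 1 ≤ 1 / γ := one_le_one_div hγ0 hγ1
  rw [hφ, hφ]
  rcases lt_or_ge γ (-s) with h1 | h1 <;> rcases lt_or_ge γ s with h2 | h2
  · linarith
  · rw [if_pos h1, if_neg (not_lt.2 h2)]
    have ht : s / γ ≤ -1 := by rw [div_le_iff₀ hγ0]; linarith
    have := poly1 lam η (s/γ) (1/γ) hη2 hηlam hlam hη hc1 ht
    have he : -s/γ = -(s/γ) := by ring
    rw [he]; linarith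
  · rw [if_neg (not_lt.2 h1), if_pos h2]
    have ht : s / γ ≤ 1 / γ := by gcongr
    have := poly3 lam η (s/γ) (1/γ) hη2 hηlam hlam hη hc1 ht
    have he : -s/γ = -(s/γ) := by ring
    rw [he]; linarith
  · rw [if_neg (not_lt.2 h1), if_neg (not_lt.2 h2)]
    have ht : s / γ ≤ 1 := by rw [div_le_one hγ0]; exact h2
    have := poly2 lam η (s/γ) (1/γ) hη2 hηlam hlam hη hc1 ht
    have he : -s/γ = -(s/γ) := by ring
    rw [he]; linarith

-- Sharper lower bound when s ≤ γ/2.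
lemma phi_lb_aux2 (γ lam η : ℝ) (hγ0 : 0 < γ) (hγ1 : γ ≤ 1) (hη : 0 ≤ η)
    (hη2 : η < 1 / 2) (hηlam : η ≤ lam) (hlam : lam < 1 / 2)
    (φ : ℝ → ℝ)
    (hφ : ∀ s, φ s = if γ < s then lam * (1 - s / γ) else (1 - lam) * (1 - s / γ))
    (s : ℝ) (hs1 : -1 ≤ s) (hs2 : s ≤ γ / 2) :
    (1 - lam) * (1 + 2 * η) / 2 ≤ η * φ (-s) + (1 - η) * φ s := by
  rw [hφ, hφ]
  have h2 : ¬ γ < s := by push_neg; linarith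
  rcases lt_or_ge γ (-s) with h1 | h1
  · rw [if_pos h1, if_neg h2]
    have ht : s / γ ≤ -1 := by rw [div_le_iff₀ hγ0]; linarith
    have := poly4 lam η (s/γ) hη2 hηlam hlam hη ht
    have he : -s/γ = -(s/γ) := by ring
    rw [he]; linarith
  · rw [if_neg (not_lt.2 h1), if_neg h2]
    have ht : s / γ ≤ 1/2 := by rw [div_le_iff₀ hγ0]; linarith
    have := poly5 lam η (s/γ) hη2 hηlam hlam hη ht
    have he : -s/γ = -(s/γ) := by ring
    rw [he]; linarith

-- Uniform bound on |φ s| for |s| ≤ 1.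
lemma phi_abs_aux (γ lam : ℝ) (hγ0 : 0 < γ) (hlam0 : 0 ≤ lam) (hlam : lam ≤ 1)
    (φ : ℝ → ℝ)
    (hφ : ∀ s, φ s = if γ < s then lam * (1 - s / γ) else (1 - lam) * (1 - s / γ))
    (s : ℝ) (hs : |s| ≤ 1) :
    |φ s| ≤ 1 + 1 / γ := by
  have hs1 : -1 ≤ s := neg_le_of_abs_le hs
  have hs2 : s ≤ 1 := le_of_abs_le hs
  have hts1 : -(1/γ) ≤ s / γ := by rw [neg_le, ← neg_div]; gcongr; linarith
  have hts2 : s / γ ≤ 1 / γ := by gcongr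
  have hc0 : 0 < 1 / γ := by positivity
  have habs : |1 - s / γ| ≤ 1 + 1 / γ := by
    rw [abs_le]; constructor <;> nlinarith
  rw [hφ]
  split_ifs with h
  · rw [abs_mul, abs_of_nonneg hlam0]
    calc lam * |1 - s / γ| ≤ 1 * (1 + 1/γ) :=
          mul_le_mul hlam habs (abs_nonneg _) zero_le_one
      _ = 1 + 1/γ := one_mul _
  · rw [abs_mul, abs_of_nonneg (by linarith : (0:ℝ) ≤ 1 - lam)]
    calc (1 - lam) * |1 - s / γ| ≤ 1 * (1 + 1/γ) :=
          mul_le_mul (by linarith) habs (abs_nonneg _) zero_le_one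
      _ = 1 + 1/γ := one_mul _

theorem stmt_12 {Ω : Type*} [MeasurableSpace Ω] (μ : Measure Ω) [IsProbabilityMeasure μ]
    (γ lam η ε' : ℝ) (hγ : γ ∈ Set.Ioc (0:ℝ) 1) (hη : 0 ≤ η) (hη2 : η < 1 / 2)
    (hηlam : η ≤ lam) (hlam : lam < 1 / 2) (hε' : 0 < ε')
    (z : Ω → ℝ) (hz : Measurable z) (hzbd : ∀ᵐ ω ∂μ, |z ω| ≤ 1)
    (φ : ℝ → ℝ)
    (hφ : ∀ s, φ s = if γ < s then lam * (1 - s / γ) else (1 - lam) * (1 - s / γ))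
    (hG : (∫ ω, (η * φ (-(z ω)) + (1 - η) * φ (z ω)) ∂μ) ≤ 2 * η * (1 - lam) + ε') :
    (1 - η) * (μ {ω | z ω ≤ γ / 2}).toReal ≤
      (2 / (1 - 2 * lam)) * (ε' + (lam - η) * (1 / γ - 1)) := by
  obtain ⟨hγ0, hγ1⟩ := hγ
  have hc1 : 1 ≤ 1 / γ := one_le_one_div hγ0 hγ1
  set v1 : ℝ := 2 * η * (1 - lam) + (η - lam) * (1 / γ - 1) with hv1
  set d : ℝ := (1 - lam) * (1 + 2 * η) / 2 - v1 with hd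
  clear_value v1 d
  have hd0 : 0 ≤ d := by
    have h1 : 0 ≤ (lam - η) * (1 / γ - 1) :=
      mul_nonneg (by linarith) (by linarith)
    rw [hd, hv1]; nlinarith
  set S : Set Ω := {ω | z ω ≤ γ / 2} with hSdef
  have hS : MeasurableSet S := hz measurableSet_Iic
  set P : ℝ := (μ S).toReal with hP
  have hP0 : 0 ≤ P := ENNReal.toReal_nonneg
  have hφm : Measurable φ := by
    have : φ = fun s => if γ < s then lam * (1 - s / γ) else (1 - lam) * (1 - s / γ) :=
      funext hφ
    rw [this]
    exact Measurable.ite measurableSet_Ioi (by fun_prop) (by fun_prop)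
  set g : Ω → ℝ := fun ω => η * φ (-(z ω)) + (1 - η) * φ (z ω) with hg
  have hgm : AEStronglyMeasurable g μ := by
    apply Measurable.aestronglyMeasurable
    exact ((hφm.comp hz.neg).const_mul η).add ((hφm.comp hz).const_mul (1 - η))
  have hgint : Integrable g μ := by
    apply (integrable_const (1 + 1/γ)).mono' hgm
    filter_upwards [hzbd] with ω hω
    have h1 : |φ (-(z ω))| ≤ 1 + 1/γ :=
      phi_abs_aux γ lam hγ0 (by linarith) (by linarith) φ hφ _ (by rw [abs_neg]; exact hω)
    have h2 : |φ (z ω)| ≤ 1 + 1/γ :=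
      phi_abs_aux γ lam hγ0 (by linarith) (by linarith) φ hφ _ hω
    rw [Real.norm_eq_abs]
    calc |η * φ (-(z ω)) + (1 - η) * φ (z ω)|
        ≤ |η * φ (-(z ω))| + |(1 - η) * φ (z ω)| := abs_add_le _ _
      _ = η * |φ (-(z ω))| + (1 - η) * |φ (z ω)| := by
          rw [abs_mul, abs_mul, abs_of_nonneg hη, abs_of_nonneg (by linarith : (0:ℝ) ≤ 1 - η)]
      _ ≤ η * (1 + 1/γ) + (1 - η) * (1 + 1/γ) := by
          gcongr <;> linarith
      _ ≤ 1 + 1/γ := by nlinarith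
  set lo : Ω → ℝ := fun ω => v1 + d * S.indicator (fun _ => (1:ℝ)) ω with hlo
  have hloint : Integrable lo μ :=
    (integrable_const v1).add (((integrable_const (1:ℝ)).indicator hS).const_mul d)
  have hle : ∀ᵐ ω ∂μ, lo ω ≤ g ω := by
    filter_upwards [hzbd] with ω hω
    have hs1 : -1 ≤ z ω := neg_le_of_abs_le hω
    have hs2 : z ω ≤ 1 := le_of_abs_le hω
    by_cases hmem : ω ∈ S
    · have hlo1 : lo ω = v1 + d := by simp [hlo, Set.indicator_of_mem hmem]
      rw [hlo1, hg]
      have h := phi_lb_aux2 γ lam η hγ0 hγ1 hη hη2 hηlam hlam φ hφ (z ω) hs1 hmem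
      show _ ≤ η * φ (-z ω) + (1 - η) * φ (z ω)
      rw [hd, hv1]; linarith
    · have hlo1 : lo ω = v1 := by simp [hlo, Set.indicator_of_notMem hmem]
      rw [hlo1, hg, hv1]
      show _ ≤ η * φ (-z ω) + (1 - η) * φ (z ω)
      exact phi_lb_aux γ lam η hγ0 hγ1 hη hη2 hηlam hlam φ hφ (z ω) hs1 hs2
  have hloval : ∫ ω, lo ω ∂μ = v1 + d * P := by
    rw [hlo, integral_add (integrable_const v1)
        (((integrable_const (1:ℝ)).indicator hS).const_mul d)]
    rw [integral_const, probReal_univ, smul_eq_mul, one_mul]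
    congr 1
    rw [integral_const_mul]
    congr 1
    exact integral_indicator_one hS
  have hkey : v1 + d * P ≤ 2 * η * (1 - lam) + ε' := by
    calc v1 + d * P = ∫ ω, lo ω ∂μ := hloval.symm
      _ ≤ ∫ ω, g ω ∂μ := integral_mono_ae hloint hgint hle
      _ ≤ 2 * η * (1 - lam) + ε' := hG
  have hdP : d * P ≤ ε' + (lam - η) * (1 / γ - 1) := by
    rw [hv1] at hkey; nlinarith [hkey]
  have hpos : (0:ℝ) < 1 - 2 * lam := by linarith
  have h2d : (1 - η) * (1 - 2 * lam) ≤ 2 * d := by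
    rw [hd, hv1]
    nlinarith [mul_nonneg (sub_nonneg.2 hηlam) (by linarith : (0:ℝ) ≤ 1/γ - 1)]
  exact poly6 lam η P d (ε' + (lam - η) * (1 / γ - 1)) hP0 hdP h2d hpos
end

section
/- Let γ > 0, η ∈ [0,1/2), u the link function as above, and let (z, z*) be random variables with |z*| > γ a.s. (z* is the margin of the true halfspace, z the candidate's margin, with sign(z*) determining the label). Then E[𝟙[sign(z*)·z ≤ γ/2]] ≤ (16/(1−2η)²)·E[(u(z) − u(z*))²]. -/
open MeasureTheory

lemma u_bounds (γ η : ℝ) (hγ : 0 < γ) (hη0 : 0 ≤ η) (hη2 : η < 1/2) (u : ℝ → ℝ)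
    (hu : ∀ s, u s = if s < -γ then η
        else if s ≤ γ then ((1 - 2 * η) / (2 * γ)) * s + 1 / 2
        else 1 - η) (s : ℝ) : 0 ≤ u s ∧ u s ≤ 1 := by
  rw [hu]
  split_ifs with h1 h2
  · constructor <;> linarith
  · push_neg at h1
    have hsl : 0 ≤ (1 - 2*η) / (2*γ) := div_nonneg (by linarith) (by linarith)
    have h3 : (1 - 2*η)/(2*γ) * s ≤ (1 - 2*η)/(2*γ) * γ := by
      exact mul_le_mul_of_nonneg_left h2 hsl
    have h4 : -((1 - 2*η)/(2*γ) * γ) ≤ (1 - 2*η)/(2*γ) * s := by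
      nlinarith [mul_le_mul_of_nonneg_left h1 hsl]
    have h5 : (1 - 2*η)/(2*γ) * γ = (1 - 2*η)/2 := by field_simp
    rw [h5] at h3 h4
    constructor <;> linarith
  · constructor <;> linarith

lemma pt_ineq (γ η : ℝ) (hγ : 0 < γ) (hη0 : 0 ≤ η) (hη2 : η < 1/2) (u : ℝ → ℝ)
    (hu : ∀ s, u s = if s < -γ then η
        else if s ≤ γ then ((1 - 2 * η) / (2 * γ)) * s + 1 / 2
        else 1 - η) (s t : ℝ) (ht : γ < |t|) :
    (if (if 0 < t then (1:ℝ) else -1) * s ≤ γ / 2 then (1:ℝ) else 0) ≤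
      16 / (1 - 2 * η) ^ 2 * (u s - u t) ^ 2 := by
  have hpos : 0 < 1 - 2 * η := by linarith
  have hsq : (0:ℝ) < (1 - 2*η)^2 := by positivity
  have hsl : 0 ≤ (1 - 2*η) / (2*γ) := div_nonneg (by linarith) (by linarith)
  have key : (if 0 < t then (1:ℝ) else -1) * s ≤ γ / 2 → (1 - 2*η)/4 ≤ |u s - u t| := by
    intro h
    rcases lt_abs.mp ht with htp | htn
    · -- t > γ
      have ht0 : 0 < t := by linarith
      rw [if_pos ht0, one_mul] at h
      have hut : u t = 1 - η := by
        rw [hu, if_neg (by push_neg; linarith), if_neg (by push_neg; linarith)]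
      have hus : u s ≤ 1/2 + (1 - 2*η)/4 := by
        rw [hu]
        split_ifs with h1 h2
        · linarith
        · have h3 : (1 - 2*η)/(2*γ) * s ≤ (1 - 2*η)/(2*γ) * (γ/2) :=
            mul_le_mul_of_nonneg_left h hsl
          have h5 : (1 - 2*η)/(2*γ) * (γ/2) = (1 - 2*η)/4 := by field_simp; ring
          linarith [h5 ▸ h3]
        · linarith
      rw [abs_sub_comm, abs_of_nonneg (by linarith)]
      linarith
    · -- t < -γ
      have ht0 : ¬ (0 < t) := by push_neg; nlinarith
      rw [if_neg ht0] at h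
      have hs : -(γ/2) ≤ s := by linarith
      have hut : u t = η := by rw [hu, if_pos (by linarith)]
      have hus : 1/2 - (1 - 2*η)/4 ≤ u s := by
        rw [hu]
        split_ifs with h1 h2
        · linarith
        · have h3 : (1 - 2*η)/(2*γ) * (-(γ/2)) ≤ (1 - 2*η)/(2*γ) * s :=
            mul_le_mul_of_nonneg_left hs hsl
          have h5 : (1 - 2*η)/(2*γ) * (-(γ/2)) = -((1 - 2*η)/4) := by field_simp; ring
          linarith [h5 ▸ h3]
        · linarith
      rw [abs_of_nonneg (by linarith)]
      linarith
  by_cases h : (if 0 < t then (1:ℝ) else -1) * s ≤ γ / 2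
  · rw [if_pos h]
    have hk := key h
    have h2 : ((1 - 2*η)/4)^2 ≤ (u s - u t)^2 := by
      calc ((1 - 2*η)/4)^2 ≤ |u s - u t|^2 :=
            pow_le_pow_left₀ (by positivity) hk 2
        _ = (u s - u t)^2 := sq_abs _
    rw [div_mul_eq_mul_div, le_div_iff₀ hsq]
    nlinarith
  · rw [if_neg h]
    positivity

theorem stmt_16 {Ω : Type*} [MeasurableSpace Ω] (μ : Measure Ω) [IsProbabilityMeasure μ]
    (γ η : ℝ) (hγ : 0 < γ) (hη : η ∈ Set.Ico (0:ℝ) (1 / 2))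
    (u : ℝ → ℝ)
    (hu : ∀ s, u s = if s < -γ then η
        else if s ≤ γ then ((1 - 2 * η) / (2 * γ)) * s + 1 / 2
        else 1 - η)
    (z zstar : Ω → ℝ) (hz : Measurable z) (hzstar : Measurable zstar)
    (hmargin : ∀ᵐ ω ∂μ, γ < |zstar ω|) :
    (∫ ω, (if (if 0 < zstar ω then (1:ℝ) else -1) * z ω ≤ γ / 2 then (1:ℝ) else 0) ∂μ) ≤
      (16 / (1 - 2 * η) ^ 2) * ∫ ω, (u (z ω) - u (zstar ω)) ^ 2 ∂μ := by
  obtain ⟨hη0, hη2⟩ := hη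
  have hu_meas : Measurable u := by
    have : u = fun s => if s < -γ then η
        else if s ≤ γ then ((1 - 2 * η) / (2 * γ)) * s + 1 / 2
        else 1 - η := funext hu
    rw [this]
    apply Measurable.ite (measurableSet_lt measurable_id measurable_const) measurable_const
    apply Measurable.ite (measurableSet_le measurable_id measurable_const) _ measurable_const
    exact (measurable_const.mul measurable_id).add measurable_const
  have hind_meas : Measurable fun ω =>
      (if (if 0 < zstar ω then (1:ℝ) else -1) * z ω ≤ γ / 2 then (1:ℝ) else 0) := by
    have hm : Measurable fun ω => (if 0 < zstar ω then (1:ℝ) else -1) * z ω :=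
      (Measurable.ite (measurableSet_lt measurable_const hzstar) measurable_const
        measurable_const).mul hz
    exact Measurable.ite (measurableSet_le hm measurable_const) measurable_const measurable_const
  have hf_meas : Measurable fun ω => (u (z ω) - u (zstar ω)) ^ 2 :=
    ((hu_meas.comp hz).sub (hu_meas.comp hzstar)).pow_const 2
  have hind_int : Integrable (fun ω =>
      (if (if 0 < zstar ω then (1:ℝ) else -1) * z ω ≤ γ / 2 then (1:ℝ) else 0)) μ := by
    apply Integrable.mono' (integrable_const (1:ℝ)) hind_meas.aestronglyMeasurable
    filter_upwards with ω
    split_ifs <;> simp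
  have hf_int : Integrable (fun ω => (u (z ω) - u (zstar ω)) ^ 2) μ := by
    apply Integrable.mono' (integrable_const (4:ℝ)) hf_meas.aestronglyMeasurable
    filter_upwards with ω
    obtain ⟨h1, h2⟩ := u_bounds γ η hγ hη0 hη2 u hu (z ω)
    obtain ⟨h3, h4⟩ := u_bounds γ η hγ hη0 hη2 u hu (zstar ω)
    rw [Real.norm_eq_abs, abs_of_nonneg (by positivity)]
    nlinarith
  calc (∫ ω, (if (if 0 < zstar ω then (1:ℝ) else -1) * z ω ≤ γ / 2 then (1:ℝ) else 0) ∂μ)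
      ≤ ∫ ω, 16 / (1 - 2 * η) ^ 2 * (u (z ω) - u (zstar ω)) ^ 2 ∂μ := by
        apply integral_mono_ae hind_int (hf_int.const_mul _)
        filter_upwards [hmargin] with ω hω
        exact pt_ineq γ η hγ hη0 hη2 u hu (z ω) (zstar ω) hω
    _ = (16 / (1 - 2 * η) ^ 2) * ∫ ω, (u (z ω) - u (zstar ω)) ^ 2 ∂μ :=
        integral_const_mul _ _
end

section
/- Let u : ℝ → ℝ be nondecreasing and L-Lipschitz. For any a, b ∈ ℝ: (u(a) − u(b))² ≤ 2L·(∫_b^a (u(s) − u(b)) ds). Equivalently, the squared link-loss gap is bounded by 2L times the Bregman-type surrogate gap. -/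
private lemma key18 (u : ℝ → ℝ) (L : ℝ) (hL : 0 ≤ L) (hmono : Monotone u)
    (hlip : ∀ s t, |u s - u t| ≤ L * |s - t|)
    (a b : ℝ) (hab : b ≤ a) :
    (u a - u b) ^ 2 ≤ 2 * L * ∫ s in b..a, (u s - u b) := by
  rcases eq_or_lt_of_le hL with hL0 | hLpos
  · have h := hlip a b
    rw [← hL0, zero_mul] at h
    have h0 : u a - u b = 0 := abs_eq_zero.mp (le_antisymm h (abs_nonneg _))
    rw [h0, ← hL0]; simp
  · set v := u a - u b with hv
    have hv0 : 0 ≤ v := by have := hmono hab; simp [hv]; linarith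
    set d := v / L with hd
    have hd0 : 0 ≤ d := div_nonneg hv0 hL
    have hdab : d ≤ a - b := by
      have h := hlip a b
      rw [abs_of_nonneg hv0, abs_of_nonneg (by linarith : (0:ℝ) ≤ a - b)] at h
      rw [hd, div_le_iff₀ hLpos]; linarith
    set c := a - d with hc
    have hbc : b ≤ c := by rw [hc]; linarith
    have hca : c ≤ a := by rw [hc]; linarith
    have hint : ∀ x y : ℝ, IntervalIntegrable (fun s => u s - u b) MeasureTheory.volume x y := by
      intro x y
      exact hmono.intervalIntegrable.sub intervalIntegrable_const
    have hsplit : (∫ s in b..a, (u s - u b)) =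
        (∫ s in b..c, (u s - u b)) + ∫ s in c..a, (u s - u b) :=
      (intervalIntegral.integral_add_adjacent_intervals (hint b c) (hint c a)).symm
    have h1 : 0 ≤ ∫ s in b..c, (u s - u b) := by
      apply intervalIntegral.integral_nonneg hbc
      intro s hs
      have := hmono hs.1; linarith
    have h2 : (∫ s in c..a, (v - L * (a - s))) ≤ ∫ s in c..a, (u s - u b) := by
      apply intervalIntegral.integral_mono_on hca _ (hint c a)
      · intro s hs
        have h := hlip a s
        rw [abs_of_nonneg (by linarith [hmono hs.2] : (0:ℝ) ≤ u a - u s),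
          abs_of_nonneg (by linarith [hs.2] : (0:ℝ) ≤ a - s)] at h
        simp only [hv]; linarith
      · exact intervalIntegrable_const.sub
          ((intervalIntegrable_const.sub intervalIntegral.intervalIntegrable_id).const_mul L)
    have hdL : d * L = v := by rw [hd]; field_simp
    have h3 : 2 * L * (∫ s in c..a, (v - L * (a - s))) = v ^ 2 := by
      have he : (∫ s in c..a, (v - L * (a - s))) =
          (∫ s in c..a, ((v - L * a) + L * s)) := by
        congr 1; ext s; ring
      rw [he, intervalIntegral.integral_add intervalIntegrable_const
        (intervalIntegral.intervalIntegrable_id.const_mul L),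
        intervalIntegral.integral_const, intervalIntegral.integral_const_mul,
        integral_id, smul_eq_mul, hc]
      linear_combination (v - d * L) * hdL
    rw [hsplit]
    have hA : 0 ≤ 2 * L * (∫ s in b..c, (u s - u b)) := by positivity
    have hB := mul_le_mul_of_nonneg_left h2 (by linarith : (0:ℝ) ≤ 2 * L)
    calc v ^ 2 = 2 * L * (∫ s in c..a, (v - L * (a - s))) := h3.symm
    _ ≤ 2 * L * ∫ s in c..a, (u s - u b) := hB
    _ ≤ _ := by linarith [mul_add (2*L) (∫ s in b..c, (u s - u b)) (∫ s in c..a, (u s - u b))]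

theorem stmt_18 (u : ℝ → ℝ) (L : ℝ) (hL : 0 ≤ L) (hmono : Monotone u)
    (hlip : ∀ s t, |u s - u t| ≤ L * |s - t|)
    (a b : ℝ) :
    (u a - u b) ^ 2 ≤ 2 * L * ∫ s in b..a, (u s - u b) := by
  rcases le_total b a with hab | hab
  · exact key18 u L hL hmono hlip a b hab
  · set U : ℝ → ℝ := fun x => -u (-x) with hU
    have hUmono : Monotone U := fun x y hxy => by
      simp only [hU, neg_le_neg_iff]
      exact hmono (by linarith)
    have hUlip : ∀ s t, |U s - U t| ≤ L * |s - t| := by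
      intro s t
      have h1 : U s - U t = -(u (-s) - u (-t)) := by simp [hU]; ring
      have h2 : |(-s) - (-t)| = |s - t| := by
        rw [show (-s) - (-t) = -(s - t) by ring, abs_neg]
      rw [h1, abs_neg, ← h2]
      exact hlip _ _
    have key := key18 U L hL hUmono hUlip (-a) (-b) (by linarith)
    have hint : (∫ s in (-b)..(-a), (U s - U (-b))) = ∫ s in b..a, (u s - u b) := by
      rw [show (∫ s in (-b)..(-a), (U s - U (-b)))
          = ∫ s in a..b, (U (-s) - U (-b)) from
        (intervalIntegral.integral_comp_neg (fun t => U t - U (-b))).symm]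
      have : ∀ s : ℝ, U (-s) - U (-b) = -(u s - u b) := by
        intro s; simp [hU]; ring
      simp_rw [this]
      rw [intervalIntegral.integral_neg, ← intervalIntegral.integral_symm]
    rw [hint] at key
    have hUval : U (-a) - U (-b) = u b - u a := by simp [hU]; ring
    rw [hUval] at key
    calc (u a - u b) ^ 2 = (u b - u a) ^ 2 := by ring
    _ ≤ _ := key
end
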